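/- arXiv:2105.06124 — 2 statements merged into one kernel-verified Lean document; each statement's English description precedes it below -/
import Mathlib

section
/- Let n = k·s, let B ∈ ℝ^{n×n} be the FRC encoding matrix, and fix m with 0 ≤ m ≤ n and p_ss, p_as ∈ [0,1]. Suppose m designated slow workers each straggle independently with probability p_ss and the remaining n−m active workers each straggle independently with probability p_as; independently, a uniformly random permutation π of {1,…,n} shuffles the columns of B among the workers. Let S be the (random) set of column indices of B held by non-straggling workers and let err(A_S) := min over x ∈ ℝ^{|S|} of ‖A_S x − 1_n‖₂², where A_S is the submatrix of B with columns indexed by S. Then E[err(A_S)] = n · Σ_{r=0}^{n−s} P_r · C(n−s, r) / C(n, r), where P_r = Σ_{i=0}^{r} C(m,i) C(n−m, r−i) (1−p_ss)^i p_ss^{m−i} (1−p_as)^{r−i} p_as^{n−m−r+i}. -/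
/-- The FRC encoding matrix for `n = k·s` workers: block-diagonal with `k`
diagonal blocks each equal to the `s × s` all-ones matrix. -/
noncomputable def frcMatrix (n s : ℕ) : Fin n → Fin n → ℝ :=
  fun i j => if (i : ℕ) / s = (j : ℕ) / s then 1 else 0

/-- `err(A_S) = min_{x} ‖A_S x − 1_n‖₂²` where `A_S` is the submatrix of `B`
with columns indexed by `S`. -/
noncomputable def errSub {n : ℕ} (B : Fin n → Fin n → ℝ) (S : Finset (Fin n)) : ℝ :=
  sInf {e : ℝ | ∃ x : Fin n → ℝ,
    e = ∑ i : Fin n, ((∑ j ∈ S, x j * B i j) - 1) ^ 2}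


/-!
With the columns `S` kept, the best decoder for the FRC matrix averages the kept columns of each
block, so `err(A_S)` is the number of rows whose block contains no kept column. Summing over the
permutations row by row, a set `N` of `r` non-straggling workers is sent outside a given
block (of size `s`) by `(n - s)ᵣ · (n - r)!` of the `n!` shufflings, so the conditional
expectation given `r` is `n · C(n-s, r) / C(n, r)`. The law of `r` is read off from the
generating polynomial `(p_ss + (1 - p_ss) X)^m (p_as + (1 - p_as) X)^(n-m)` of the number of
non-stragglers.
-/

open Finset Polynomial
open scoped Nat

section PermutationCounting

variable {α : Type*} [Fintype α] [DecidableEq α]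

theorem Equiv.Perm.card_extending_embedding (N : Finset α) (f : N ↪ α) :
    Fintype.card {π : Equiv.Perm α // ∀ x : N, π x = f x} = (Fintype.card α - #N)! := by
  let e₀ : (N : Set α) ≃ Set.range f := Equiv.ofInjective f f.injective
  have hcompl : Fintype.card ((N : Set α)ᶜ : Set α) = Fintype.card ((Set.range f)ᶜ : Set α) := by
    rw [Fintype.card_compl_set, Fintype.card_compl_set, Fintype.card_range]
    simp
  refine (Fintype.card_congr (Equiv.Set.compl e₀)).trans ?_
  rw [Fintype.card_equiv (Fintype.equivOfCardEq hcompl), Fintype.card_compl_set]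
  simp

theorem Equiv.Perm.card_filter_forall_mem_apply_mem (N U : Finset α) :
    #{π : Equiv.Perm α | ∀ w ∈ N, π w ∈ U} = (#U).descFactorial #N * (Fintype.card α - #N)! := by
  let restrict (π : Equiv.Perm α) : N ↪ α := (Function.Embedding.subtype _).trans π.toEmbedding
  have hmaps : ∀ π ∈ ({π : Equiv.Perm α | ∀ w ∈ N, π w ∈ U} : Finset _),
      restrict π ∈ ({f : N ↪ α | ∀ x, f x ∈ U} : Finset _) := by
    intro π hπ
    simp only [mem_filter, mem_univ, true_and] at hπ ⊢
    exact fun x => hπ x x.2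
  have hfiber : ∀ f ∈ ({f : N ↪ α | ∀ x, f x ∈ U} : Finset _),
      #{π ∈ ({π : Equiv.Perm α | ∀ w ∈ N, π w ∈ U} : Finset _) | restrict π = f}
        = (Fintype.card α - #N)! := by
    intro f hf
    simp only [mem_filter, mem_univ, true_and] at hf
    rw [filter_filter, ← Equiv.Perm.card_extending_embedding N f, ← Fintype.card_subtype]
    refine Fintype.card_congr (Equiv.subtypeEquivRight fun π => ⟨?_, fun h => ?_⟩)
    · rintro ⟨-, rfl⟩ x
      rfl
    · exact ⟨fun w hw => h ⟨w, hw⟩ ▸ hf _, DFunLike.ext _ _ fun x => h x⟩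
  have hembeddings : #({f : N ↪ α | ∀ x, f x ∈ U} : Finset _) = (#U).descFactorial #N := by
    rw [← Fintype.card_coe U, ← Fintype.card_coe N, ← Fintype.card_embedding_eq,
      ← Fintype.card_subtype]
    exact Fintype.card_congr
      { toFun f := ⟨fun x => ⟨f.1 x, f.2 x⟩, fun _ _ h => f.1.injective (congrArg Subtype.val h)⟩
        invFun g := ⟨g.trans (Function.Embedding.subtype _), fun x => (g x).2⟩
        left_inv _ := rfl
        right_inv _ := rfl }
  rw [card_eq_sum_card_fiberwise hmaps, sum_congr rfl hfiber, sum_const, smul_eq_mul,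
    hembeddings]

theorem Equiv.Perm.sum_card_filter_notMem_image {β : Type*} [DecidableEq β] (f : α → β)
    (N : Finset α) :
    ∑ π : Equiv.Perm α, #{i | f i ∉ (N.image π).image f}
      = ∑ i, (#{j | f j ≠ f i}).descFactorial #N * (Fintype.card α - #N)! := by
  rw [sum_congr rfl fun π _ => card_filter _ _, sum_comm]
  refine sum_congr rfl fun i _ => ?_
  rw [← card_filter, ← Equiv.Perm.card_filter_forall_mem_apply_mem]
  simp

end PermutationCounting

def blockOnes {n : ℕ} {β : Type*} [DecidableEq β] (f : Fin n → β) : Fin n → Fin n → ℝ :=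
  fun i j => if f i = f j then 1 else 0

theorem frcMatrix_eq_blockOnes (n s : ℕ) :
    frcMatrix n s = blockOnes (fun i : Fin n => (i : ℕ) / s) :=
  rfl

theorem errSub_blockOnes_eq_card {n : ℕ} {β : Type*} [DecidableEq β] (f : Fin n → β)
    (S : Finset (Fin n)) :
    errSub (blockOnes f) S = #{i | f i ∉ S.image f} := by
  have hzero : ∀ (x : Fin n → ℝ) i, f i ∉ S.image f → ∑ j ∈ S, x j * blockOnes f i j = 0 :=
    fun x i hi => sum_eq_zero fun j hj => by
      have hij : f i ≠ f j := fun h => hi (mem_image.2 ⟨j, hj, h.symm⟩)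
      simp [blockOnes, hij]
  rw [natCast_card_filter]
  refine IsLeast.csInf_eq ⟨?_, ?_⟩
  · let c : β → ℝ := fun b => #{j ∈ S | f j = b}
    refine ⟨fun j => (c (f j))⁻¹, sum_congr rfl fun i _ => ?_⟩
    by_cases hi : f i ∈ S.image f
    · have hrow : ∑ j ∈ S, (c (f j))⁻¹ * blockOnes f i j = c (f i) * (c (f i))⁻¹ := by
        calc ∑ j ∈ S, (c (f j))⁻¹ * blockOnes f i j
            = ∑ j ∈ S, if f j = f i then (c (f i))⁻¹ else 0 :=
              sum_congr rfl fun j _ => by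
                by_cases h : f j = f i
                · simp [blockOnes, h]
                · simp [blockOnes, h, Ne.symm h]
          _ = c (f i) * (c (f i))⁻¹ := by rw [← sum_filter, sum_const, nsmul_eq_mul]
      have hc : c (f i) ≠ 0 := by
        obtain ⟨j, hj, hji⟩ := mem_image.1 hi
        exact Nat.cast_ne_zero.2 (card_ne_zero.2 ⟨j, mem_filter.2 ⟨hj, hji⟩⟩)
      rw [hrow, mul_inv_cancel₀ hc, if_neg (not_not.2 hi)]; norm_num
    · rw [hzero _ i hi, if_pos hi]; norm_num
  · rintro e ⟨x, rfl⟩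
    refine sum_le_sum fun i _ => ?_
    by_cases hi : f i ∈ S.image f
    · rw [if_neg (not_not.2 hi)]; positivity
    · rw [hzero x i hi, if_pos hi]; norm_num

theorem Fin.card_filter_div_eq {k s n : ℕ} (hs : 0 < s) (hn : n = k * s) (i : Fin n) :
    #{j : Fin n | (j : ℕ) / s = (i : ℕ) / s} = s := by
  subst hn
  have hblock : i / s * s + s ≤ k * s := by
    rw [← Nat.succ_mul]
    exact Nat.mul_le_mul_right s ((Nat.div_lt_iff_lt_mul hs).2 i.isLt)
  have hvals : ({j : Fin (k * s) | (j : ℕ) / s = (i : ℕ) / s} : Finset _).map Fin.valEmbedding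
      = Ico (i / s * s) (i / s * s + s) := by
    ext x
    simp only [mem_map, mem_filter, mem_univ, true_and, Fin.valEmbedding_apply, mem_Ico]
    constructor
    · rintro ⟨j, hj, rfl⟩
      rw [← hj]
      exact ⟨Nat.div_mul_le_self _ _, Nat.lt_div_mul_add hs⟩
    · rintro ⟨h1, h2⟩
      have hx : x / s = i / s := (Nat.div_eq_iff hs).2 ⟨h1, by omega⟩
      exact ⟨⟨x, by omega⟩, hx, rfl⟩
  rw [← card_map Fin.valEmbedding, hvals, Nat.card_Ico, Nat.add_sub_cancel_left]

theorem sum_perm_errSub_frcMatrix {k s n : ℕ} (hs : 0 < s) (hn : n = k * s)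
    (N : Finset (Fin n)) :
    ∑ π : Equiv.Perm (Fin n), errSub (frcMatrix n s) (N.image π)
      = n * ((n - s).descFactorial #N * (n - #N)! : ℕ) := by
  have hoff_block : ∀ i : Fin n, #{j : Fin n | (j : ℕ) / s ≠ (i : ℕ) / s} = n - s := fun i => by
    rw [filter_not, card_sdiff_of_subset (filter_subset _ _), Fin.card_filter_div_eq hs hn,
      card_univ, Fintype.card_fin]
  simp_rw [frcMatrix_eq_blockOnes, errSub_blockOnes_eq_card]
  rw [← Nat.cast_sum, Equiv.Perm.sum_card_filter_notMem_image (fun i : Fin n => (i : ℕ) / s)]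
  simp [hoff_block]

theorem Nat.cast_descFactorial_mul_factorial_div_factorial (a : ℕ) {n r : ℕ} (hr : r ≤ n) :
    ((a.descFactorial r * (n - r)! : ℕ) : ℝ) / n ! = a.choose r / n.choose r := by
  have hn : (n ! : ℝ) = n.choose r * r ! * (n - r)! := by
    exact_mod_cast (Nat.choose_mul_factorial_mul_factorial hr).symm
  have hchoose : (n.choose r : ℝ) ≠ 0 := by exact_mod_cast (Nat.choose_pos hr).ne'
  rw [hn, Nat.descFactorial_eq_factorial_mul_choose]
  push_cast
  field_simp

theorem expected_errSub_frcMatrix {k s n : ℕ} (hs : 0 < s) (hn : n = k * s)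
    (N : Finset (Fin n)) :
    (n ! : ℝ)⁻¹ * ∑ π : Equiv.Perm (Fin n), errSub (frcMatrix n s) (N.image π)
      = n * ((n - s).choose #N / n.choose #N) := by
  have hN : #N ≤ n := by simpa using card_le_univ N
  rw [sum_perm_errSub_frcMatrix hs hn, ← Nat.cast_descFactorial_mul_factorial_div_factorial _ hN]
  ring

section GeneratingPolynomial

variable {R : Type*} [CommRing R]

theorem Polynomial.coeff_C_add_C_mul_X_pow (a b : R) (m i : ℕ) :
    ((C a + C b * X) ^ m).coeff i = m.choose i * b ^ i * a ^ (m - i) := by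
  have hterm : ∀ k, (C b * X) ^ k * C a ^ (m - k) * (m.choose k : R[X])
      = C (m.choose k * b ^ k * a ^ (m - k)) * X ^ k := fun k => by
    simp only [map_mul, map_pow, map_natCast]; ring
  simp_rw [add_comm (C a), add_pow, hterm, finsetSum_coeff, coeff_C_mul_X_pow, sum_ite_eq,
    mem_range]
  split_ifs with hi
  · rfl
  · simp [Nat.choose_eq_zero_of_lt (Nat.lt_of_succ_le (not_lt.1 hi))]

theorem Polynomial.coeff_C_add_C_mul_X_pow_mul_C_add_C_mul_X_pow (a b c d : R) (m l r : ℕ) :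
    ((C a + C b * X) ^ m * (C c + C d * X) ^ l).coeff r
      = ∑ i ∈ range (r + 1),
          m.choose i * l.choose (r - i) * b ^ i * a ^ (m - i) * d ^ (r - i) *
            c ^ (l - (r - i)) := by
  rw [coeff_mul, Nat.sum_antidiagonal_eq_sum_range_succ_mk]
  refine sum_congr rfl fun i _ => ?_
  rw [coeff_C_add_C_mul_X_pow, coeff_C_add_C_mul_X_pow]
  ring

variable {ι : Type*} [Fintype ι] [DecidableEq ι]

theorem Polynomial.prod_C_add_C_mul_X_eq_sum (q : ι → R) :
    ∏ x, (C (q x) + C (1 - q x) * X)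
      = ∑ ω : ι → Bool, C (∏ x, if ω x then q x else 1 - q x) * X ^ #{x | ω x = false} := by
  have hfactor : ∀ x, C (q x) + C (1 - q x) * X
      = ∑ b : Bool, C (if b then q x else 1 - q x) * X ^ (if b then 0 else 1) := by
    simp
  simp_rw [hfactor, Fintype.prod_sum, prod_mul_distrib, ← map_prod, prod_pow_eq_pow_sum,
    card_filter]
  congr! 4 with ω x
  split_ifs <;> simp_all

theorem sum_prod_bernoulli_mul_eq_sum_coeff (q : ι → R) (g : ℕ → R) :
    ∑ ω : ι → Bool, (∏ x, if ω x then q x else 1 - q x) * g #{x | ω x = false}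
      = ∑ r ∈ range (Fintype.card ι + 1), (∏ x, (C (q x) + C (1 - q x) * X)).coeff r * g r := by
  simp_rw [prod_C_add_C_mul_X_eq_sum, finsetSum_coeff, coeff_C_mul_X_pow, sum_mul, ite_mul,
    zero_mul]
  rw [sum_comm]
  refine sum_congr rfl fun ω _ => ?_
  rw [sum_ite_eq', if_pos (mem_range_succ_iff.2 (card_le_univ _))]

end GeneratingPolynomial

theorem Fin.prod_ite_val_lt {M : Type*} [CommMonoid M] {m n : ℕ} (hm : m ≤ n) (a b : M) :
    ∏ i : Fin n, (if (i : ℕ) < m then a else b) = a ^ m * b ^ (n - m) := by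
  rw [Fin.prod_univ_eq_prod_range (fun i => if i < m then a else b),
    ← prod_range_mul_prod_Ico _ hm, prod_congr rfl fun i hi => if_pos (mem_range.1 hi),
    prod_congr rfl fun i hi => if_neg (not_lt.2 (mem_Ico.1 hi).1), Finset.prod_const,
    Finset.prod_const, card_range, Nat.card_Ico]

theorem frc_expected_error_heterogeneous_shuffling_general
    (k s n m : ℕ) (hs : 0 < s) (hn : n = k * s) (hm : m ≤ n)
    (p_ss p_as : ℝ) :
    ∑ π : Equiv.Perm (Fin n), ∑ ω : Fin n → Bool,
      ((n.factorial : ℝ)⁻¹ *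
        ∏ i : Fin n,
          (if ω i then (if (i : ℕ) < m then p_ss else p_as)
           else 1 - (if (i : ℕ) < m then p_ss else p_as))) *
      errSub (frcMatrix n s)
        ((Finset.univ.filter (fun w : Fin n => ω w = false)).image
          (fun w => π w))
    = (n : ℝ) * ∑ r ∈ Finset.range (n - s + 1),
        (∑ i ∈ Finset.range (r + 1),
          (m.choose i : ℝ) * ((n - m).choose (r - i) : ℝ) *
            (1 - p_ss) ^ i * p_ss ^ (m - i) *
            (1 - p_as) ^ (r - i) * p_as ^ (n - m - (r - i))) *
        ((n - s).choose r : ℝ) / (n.choose r : ℝ) := by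
  set q : Fin n → ℝ := fun i => if (i : ℕ) < m then p_ss else p_as
  set G : ℕ → ℝ := fun r => ((n - s).choose r : ℝ) / (n.choose r : ℝ)
  set P : ℝ[X] := (C p_ss + C (1 - p_ss) * X) ^ m * (C p_as + C (1 - p_as) * X) ^ (n - m)
  have hpgf : ∏ i, (C (q i) + C (1 - q i) * X) = P := by
    refine (prod_congr rfl fun i _ => ?_).trans (Fin.prod_ite_val_lt hm _ _)
    simp only [q]
    split_ifs <;> rfl
  have hlaw := sum_prod_bernoulli_mul_eq_sum_coeff q G
  rw [Fintype.card_fin, hpgf] at hlaw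
  have hG : ∀ r ∈ range (n + 1), r ∉ range (n - s + 1) → P.coeff r * G r = 0 :=
    fun r _ hr => by simp [G, Nat.choose_eq_zero_of_lt (by simpa using hr : n - s < r)]
  calc _ = ∑ ω : Fin n → Bool, (∏ i, if ω i then q i else 1 - q i) *
        (n * G #{w | ω w = false}) := by
        rw [sum_comm]
        refine sum_congr rfl fun ω _ => ?_
        rw [← expected_errSub_frcMatrix hs hn, mul_sum, mul_sum]
        exact sum_congr rfl fun π _ => by ring
    _ = n * ∑ r ∈ range (n + 1), P.coeff r * G r := by
        rw [← hlaw, mul_sum]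
        exact sum_congr rfl fun ω _ => by ring
    _ = n * ∑ r ∈ range (n - s + 1), P.coeff r * G r := by
        rw [sum_subset (range_subset_range.2 (by omega)) hG]
    _ = _ := by
        simp_rw [P, coeff_C_add_C_mul_X_pow_mul_C_add_C_mul_X_pow, G, mul_div_assoc]

theorem frc_expected_error_heterogeneous_shuffling
    (k s n m : ℕ) (hk : 0 < k) (hs : 0 < s) (hn : n = k * s) (hm : m ≤ n)
    (p_ss p_as : ℝ)
    (hss0 : 0 ≤ p_ss) (hss1 : p_ss ≤ 1) (has0 : 0 ≤ p_as) (has1 : p_as ≤ 1) :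
    ∑ π : Equiv.Perm (Fin n), ∑ ω : Fin n → Bool,
      ((n.factorial : ℝ)⁻¹ *
        ∏ i : Fin n,
          (if ω i then (if (i : ℕ) < m then p_ss else p_as)
           else 1 - (if (i : ℕ) < m then p_ss else p_as))) *
      errSub (frcMatrix n s)
        ((Finset.univ.filter (fun w : Fin n => ω w = false)).image
          (fun w => π w))
    = (n : ℝ) * ∑ r ∈ Finset.range (n - s + 1),
        (∑ i ∈ Finset.range (r + 1),
          (m.choose i : ℝ) * ((n - m).choose (r - i) : ℝ) *
            (1 - p_ss) ^ i * p_ss ^ (m - i) *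
            (1 - p_as) ^ (r - i) * p_as ^ (n - m - (r - i))) *
        ((n - s).choose r : ℝ) / (n.choose r : ℝ) :=
  frc_expected_error_heterogeneous_shuffling_general k s n m hs hn hm p_ss p_as
end

section
/- Let n = k·s and let B ∈ ℝ^{n×n} be the FRC encoding matrix. Suppose each of the n workers independently belongs to the slow class with probability p̂; slow workers straggle independently with probability p_ss and active workers with probability p_as; independently, a uniformly random permutation shuffles the columns of B among the workers; let S be the (random) set of column indices held by non-stragglers and err(A_S) := min over x of ‖A_S x − 1_n‖₂². Then E[err(A_S)] = Σ_{m=0}^{n} C(n,m) p̂^m (1−p̂)^{n−m} · E_err(FRC, n, m, s), where E_err(FRC, n, m, s) = n · Σ_{r=0}^{n−s} P_r(m) · C(n−s,r)/C(n,r) and P_r(m) = Σ_{i=0}^{r} C(m,i) C(n−m, r−i) (1−p_ss)^i p_ss^{m−i} (1−p_as)^{r−i} p_as^{n−m−r+i}. -/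
/-!
For the block matrix of FRC the least-squares problem decouples over the blocks: the residual of
a row can be made zero exactly when some column of its block survives, so `err(A_S)` counts the
rows whose block of `s` columns misses `S`. A fixed set of `r` surviving workers is sent by a
uniform shuffle into the complement of a given block of size `s` with probability
`C(n-s,r)/C(n,r)`, so the shuffled error is `n C(n-s,r)/C(n,r)`. The straggler and class weights
are then summed by reading off coefficients of the generating polynomial `∏ᵢ ((1-qᵢ)X + qᵢ)`,
which factors as `((1-p_ss)X + p_ss)^m ((1-p_as)X + p_as)^(n-m)`.
-/

open Finset Polynomial Equiv

theorem errSub_blockOnes {n : ℕ} {β : Type*} [DecidableEq β] (blk : Fin n → β)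
    (S : Finset (Fin n)) :
    errSub (fun i j => if blk i = blk j then 1 else 0) S = #{i | ∀ j ∈ S, blk j ≠ blk i} := by
  set block : Fin n → Finset (Fin n) := fun i => {j ∈ S | blk j = blk i}
  have hrow (x : Fin n → ℝ) (i : Fin n) :
      ∑ j ∈ S, x j * (if blk i = blk j then 1 else 0) = ∑ j ∈ block i, x j := by
    simp only [block, sum_filter, mul_ite, mul_one, mul_zero, eq_comm]
  have hblock (i : Fin n) : block i = ∅ ↔ ∀ j ∈ S, blk j ≠ blk i := by
    simp [block, filter_eq_empty_iff]
  have hcard : (#{i | ∀ j ∈ S, blk j ≠ blk i} : ℝ)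
      = ∑ i, if ∀ j ∈ S, blk j ≠ blk i then 1 else 0 := by
    simp
  -- the best fit spreads weight `1` evenly over the columns of `S` in each block
  set x₀ : Fin n → ℝ := fun j => (#(block j) : ℝ)⁻¹
  have hx₀ (i : Fin n) : ((∑ j ∈ block i, x₀ j) - 1) ^ 2
      = if ∀ j ∈ S, blk j ≠ blk i then 1 else 0 := by
    split_ifs with hi
    · simp [(hblock i).2 hi]
    · have hne : (block i).Nonempty := nonempty_iff_ne_empty.2 (mt (hblock i).1 hi)
      have hsame : ∀ j ∈ block i, block j = block i := fun j hj => by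
        simp only [block, (mem_filter.1 hj).2]
      rw [sum_congr rfl fun j hj => congrArg (fun t : Finset (Fin n) => (#t : ℝ)⁻¹) (hsame j hj),
        sum_const, nsmul_eq_mul, mul_inv_cancel₀ (by exact_mod_cast hne.card_ne_zero)]
      norm_num
  have hlower (x : Fin n → ℝ) (i : Fin n) : (if ∀ j ∈ S, blk j ≠ blk i then 1 else 0 : ℝ)
      ≤ ((∑ j ∈ block i, x j) - 1) ^ 2 := by
    split_ifs with hi
    · simp [(hblock i).2 hi]
    · positivity
  refine IsLeast.csInf_eq ⟨⟨x₀, ?_⟩, ?_⟩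
  · simp only [hrow, hx₀, hcard]
  · rintro e ⟨x, rfl⟩
    simp only [hrow, hcard]
    exact sum_le_sum fun i _ => hlower x i

theorem card_filter_div_eq_div {n s : ℕ} (hsn : s ∣ n) (i : Fin n) :
    #{j : Fin n | (j : ℕ) / s = i / s} = s := by
  have hs : 0 < s := Nat.pos_of_ne_zero fun h => by
    subst h
    exact (zero_dvd_iff.1 hsn ▸ i).elim0
  have hend : (i / s) * s + s ≤ n := by
    rw [← Nat.succ_mul]
    exact (Nat.mul_le_mul_right s (Nat.div_lt_div_of_lt_of_dvd hsn i.2)).trans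
      (Nat.div_mul_cancel hsn).le
  have hblock : {x ∈ Iio n | x / s = i / s} = Ico ((i / s) * s) ((i / s) * s + s) := by
    ext x
    simp only [mem_filter, mem_Iio, mem_Ico, Nat.div_eq_iff hs]
    omega
  have hval : {x ∈ Iio n | x / s = i / s} = (univ.filter fun j : Fin n => (j : ℕ) / s = i / s).map
      Fin.valEmbedding := by
    rw [← Fin.map_valEmbedding_univ, filter_map]
    rfl
  rw [← card_map Fin.valEmbedding, ← hval, hblock, Nat.card_Ico]
  omega

theorem Finset.exists_perm_image_eq {α : Type*} [DecidableEq α] {F F' : Finset α} (h : #F' = #F) :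
    ∃ σ : Perm α, F'.image σ = F := by
  obtain ⟨σ, hσ⟩ := (Set.powersetCard.isPretransitive (α := α) (n := #F)).exists_smul_eq
    ⟨F', h⟩ ⟨F, rfl⟩
  refine ⟨σ, ?_⟩
  simpa [Finset.smul_finset_def, Perm.smul_def] using congrArg Subtype.val hσ

section PermAvoid

variable {α : Type*} [Fintype α] [DecidableEq α]

theorem card_perm_avoid_eq_of_card_eq (T : Finset α) {F F' : Finset α} (h : #F' = #F) :
    #{π : Perm α | ∀ w ∈ F', π w ∉ T} = #{π : Perm α | ∀ w ∈ F, π w ∉ T} := by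
  obtain ⟨σ, rfl⟩ := Finset.exists_perm_image_eq h
  refine card_equiv (Equiv.mulRight σ⁻¹) fun π => ?_
  simp [Perm.mul_apply]

theorem sum_card_perm_avoid_powersetCard (T : Finset α) (r : ℕ) :
    ∑ F ∈ powersetCard r (univ : Finset α), #{π : Perm α | ∀ w ∈ F, π w ∉ T}
      = (Fintype.card α).factorial * (Fintype.card α - #T).choose r := by
  have hfib (π : Perm α) : {F ∈ powersetCard r (univ : Finset α) | ∀ w ∈ F, π w ∉ T}
      = powersetCard r (Tᶜ.map π.symm.toEmbedding) := by
    ext F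
    simp only [mem_filter, mem_powersetCard, subset_iff, mem_map_equiv, mem_compl,
      Equiv.symm_symm, mem_univ, implies_true, true_and]
    tauto
  simp only [card_filter]
  rw [sum_comm]
  simp only [← card_filter, hfib, card_powersetCard, card_map, card_compl, sum_const, card_univ,
    Fintype.card_perm, smul_eq_mul]

theorem card_perm_avoid_mul_choose (F T : Finset α) :
    #{π : Perm α | ∀ w ∈ F, π w ∉ T} * (Fintype.card α).choose #F
      = (Fintype.card α).factorial * (Fintype.card α - #T).choose #F := by
  rw [← sum_card_perm_avoid_powersetCard, sum_congr rfl fun F' hF' =>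
    card_perm_avoid_eq_of_card_eq T (mem_powersetCard_univ.1 hF'), sum_const,
    card_powersetCard, card_univ, smul_eq_mul, mul_comm]

end PermAvoid

theorem prod_comp_ite_eq_pow_mul_pow {ι β M : Type*} [Fintype ι] [CommMonoid M]
    (c : ι → Bool) (f : β → M) (a b : β) :
    ∏ i, f (if c i then a else b) = f a ^ #{i | c i} * f b ^ (Fintype.card ι - #{i | c i}) := by
  have hcompl := card_filter_add_card_filter_not (s := (univ : Finset ι)) (fun i => c i)
  simp_rw [apply_ite f, prod_ite, prod_const, card_univ] at hcompl ⊢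
  rw [← hcompl, Nat.add_sub_cancel_left]

section GeneratingFunction

variable {R : Type*} [CommRing R]

theorem coeff_C_mul_X_add_C_pow (a b : R) (m i : ℕ) :
    ((C a * X + C b) ^ m).coeff i = m.choose i * a ^ i * b ^ (m - i) := by
  rw [add_pow, finsetSum_coeff]
  simp_rw [mul_pow, ← C_pow, ← C_eq_natCast, mul_assoc, mul_comm (X ^ _), ← mul_assoc, ← C_mul,
    coeff_C_mul_X_pow]
  rw [sum_ite_eq]
  split_ifs with hi
  · ring
  · rw [Nat.choose_eq_zero_of_lt (by simpa using hi)]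
    simp

theorem coeff_C_mul_X_add_C_pow_mul_pow (a b a' b' : R) (m m' r : ℕ) :
    ((C a * X + C b) ^ m * (C a' * X + C b') ^ m').coeff r
      = ∑ i ∈ range (r + 1), (m.choose i : R) * (m'.choose (r - i) : R) *
          a ^ i * b ^ (m - i) * a' ^ (r - i) * b' ^ (m' - (r - i)) := by
  rw [coeff_mul, Nat.sum_antidiagonal_eq_sum_range_succ_mk]
  refine sum_congr rfl fun i _ => ?_
  rw [coeff_C_mul_X_add_C_pow, coeff_C_mul_X_add_C_pow]
  ring

variable {ι : Type*} [Fintype ι] [DecidableEq ι]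

theorem sum_C_prod_mul_X_pow_card_eq_prod (w : ι → Bool → R) (b : Bool) :
    ∑ ω : ι → Bool, C (∏ i, w i (ω i)) * X ^ #{i | ω i = b}
      = ∏ i, (C (w i b) * X + C (w i !b)) := by
  have hfactor (i : ι) : C (w i b) * X + C (w i !b)
      = ∑ β : Bool, C (w i β) * X ^ (if β = b then 1 else 0) := by
    cases b <;> simp [add_comm]
  simp_rw [hfactor, Fintype.prod_sum, prod_mul_distrib, ← map_prod, prod_pow_eq_pow_sum,
    card_filter]

theorem sum_prod_mul_card_eq_sum_coeff (w : ι → Bool → R) (b : Bool) (h : ℕ → R) :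
    ∑ ω : ι → Bool, (∏ i, w i (ω i)) * h #{i | ω i = b}
      = ∑ r ∈ range (Fintype.card ι + 1),
          (∏ i, (C (w i b) * X + C (w i !b))).coeff r * h r := by
  simp_rw [← sum_C_prod_mul_X_pow_card_eq_prod, finsetSum_coeff, coeff_C_mul_X_pow, sum_mul,
    ite_mul, zero_mul]
  rw [sum_comm]
  refine sum_congr rfl fun ω _ => ?_
  rw [sum_ite_eq', if_pos (mem_range_succ_iff.2 (card_le_univ _))]

theorem sum_bernoulli_mul_card_eq_sum_choose (p : R) (h : ℕ → R) :
    ∑ c : ι → Bool, (∏ i, if c i then p else 1 - p) * h #{i | c i = true}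
      = ∑ m ∈ range (Fintype.card ι + 1),
          ((Fintype.card ι).choose m : R) * p ^ m * (1 - p) ^ (Fintype.card ι - m) * h m := by
  rw [sum_prod_mul_card_eq_sum_coeff (fun _ β => if β then p else 1 - p) true h]
  simp only [if_true, Bool.not_true, Bool.false_eq_true, if_false, prod_const, card_univ,
    coeff_C_mul_X_add_C_pow]

end GeneratingFunction

/-- The paper's `P_r(m)`: the probability that exactly `r` of the `n` workers respond when `m` of
them are slow. -/
noncomputable def respondProb (n m r : ℕ) (p_ss p_as : ℝ) : ℝ :=
  ∑ i ∈ range (r + 1),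
    (m.choose i : ℝ) * ((n - m).choose (r - i) : ℝ) *
      (1 - p_ss) ^ i * p_ss ^ (m - i) *
      (1 - p_as) ^ (r - i) * p_as ^ (n - m - (r - i))

/-- The paper's `E_err(FRC, n, m, s)`. -/
noncomputable def frcExpectedErr (n s m : ℕ) (p_ss p_as : ℝ) : ℝ :=
  (n : ℝ) * ∑ r ∈ range (n - s + 1),
    respondProb n m r p_ss p_as * ((n - s).choose r : ℝ) / (n.choose r : ℝ)

theorem sum_perm_errSub_frcMatrix_image {n s : ℕ} (hsn : s ∣ n) (F : Finset (Fin n)) :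
    ∑ π : Perm (Fin n), errSub (frcMatrix n s) (F.image π)
      = n.factorial * (n * (n - s).choose #F / n.choose #F) := by
  set T : Fin n → Finset (Fin n) := fun i => {j | (j : ℕ) / s = i / s}
  have herr (π : Perm (Fin n)) :
      errSub (frcMatrix n s) (F.image π) = #{i : Fin n | ∀ j ∈ F.image π, (j : ℕ) / s ≠ i / s} :=
    errSub_blockOnes (fun i : Fin n => (i : ℕ) / s) _
  have hswap : ∑ π : Perm (Fin n), #{i : Fin n | ∀ j ∈ F.image π, (j : ℕ) / s ≠ i / s}
      = ∑ i, #{π : Perm (Fin n) | ∀ w ∈ F, π w ∉ T i} := by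
    simp only [card_filter]
    rw [sum_comm]
    simp [T]
  have hcount (i : Fin n) : (#{π : Perm (Fin n) | ∀ w ∈ F, π w ∉ T i} : ℝ)
      = n.factorial * (n - s).choose #F / n.choose #F := by
    have hchoose : (n.choose #F : ℝ) ≠ 0 := by
      exact_mod_cast (Nat.choose_pos (by simpa using card_le_univ F)).ne'
    rw [eq_div_iff hchoose]
    have := card_perm_avoid_mul_choose F (T i)
    rw [Fintype.card_fin, card_filter_div_eq_div hsn] at this
    norm_cast
    -- the two sides differ only in how `∀ w ∈ F, _` is decided
    convert this using 4
  simp_rw [herr]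
  rw [← Nat.cast_sum, hswap, Nat.cast_sum, sum_congr rfl fun i _ => hcount i, sum_const,
    card_univ, Fintype.card_fin, nsmul_eq_mul]
  ring

theorem sum_stragglerWeight_mul_eq_frcExpectedErr (n s : ℕ) (p_ss p_as : ℝ) (c : Fin n → Bool) :
    ∑ ω : Fin n → Bool, (∏ i : Fin n,
        (if ω i then (if c i then p_ss else p_as) else 1 - (if c i then p_ss else p_as))) *
      ((n : ℝ) * (n - s).choose #{i | ω i = false} / n.choose #{i | ω i = false})
    = frcExpectedErr n s #{i | c i = true} p_ss p_as := by
  have hgen := sum_prod_mul_card_eq_sum_coeff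
    (fun i β => if β then (if c i then p_ss else p_as) else 1 - (if c i then p_ss else p_as))
    false (fun r => (n : ℝ) * (n - s).choose r / n.choose r)
  simp only [Bool.not_false, Bool.false_eq_true, if_false, if_true] at hgen
  have hprod : ∏ i : Fin n,
        (C (1 - (if c i then p_ss else p_as)) * X + C (if c i then p_ss else p_as))
      = (C (1 - p_ss) * X + C p_ss) ^ #{i | c i = true} *
        (C (1 - p_as) * X + C p_as) ^ (n - #{i | c i = true}) := by
    rw [prod_comp_ite_eq_pow_mul_pow c (fun q => C (1 - q) * X + C q), Fintype.card_fin]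
  rw [hgen, hprod, Fintype.card_fin, frcExpectedErr, mul_sum]
  have htail : ∀ r ∈ range (n + 1), r ∉ range (n - s + 1) →
      ((C (1 - p_ss) * X + C p_ss) ^ #{i | c i = true} *
        (C (1 - p_as) * X + C p_as) ^ (n - #{i | c i = true})).coeff r *
        ((n : ℝ) * (n - s).choose r / n.choose r) = 0 := by
    intro r _ hr
    rw [Nat.choose_eq_zero_of_lt (by simpa using hr)]
    simp
  rw [← sum_subset (range_subset_range.2 (by omega)) htail]
  refine sum_congr rfl fun r _ => ?_
  rw [coeff_C_mul_X_add_C_pow_mul_pow, respondProb]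
  ring

-- `c i` : worker `i` is slow, `ω i` : worker `i` straggles, worker `w` holds column `π w`.
theorem frc_expected_error_random_classes_general
    (k s n : ℕ) (hn : n = k * s)
    (phat p_ss p_as : ℝ) :
    ∑ c : Fin n → Bool, ∑ π : Equiv.Perm (Fin n), ∑ ω : Fin n → Bool,
      ((∏ i : Fin n, (if c i then phat else 1 - phat)) *
        (n.factorial : ℝ)⁻¹ *
        (∏ i : Fin n,
          (if ω i then (if c i then p_ss else p_as)
           else 1 - (if c i then p_ss else p_as)))) *
      errSub (frcMatrix n s)
        ((Finset.univ.filter (fun w : Fin n => ω w = false)).image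
          (fun w => π w))
    = ∑ m ∈ Finset.range (n + 1),
        (n.choose m : ℝ) * phat ^ m * (1 - phat) ^ (n - m) *
        ((n : ℝ) * ∑ r ∈ Finset.range (n - s + 1),
          (∑ i ∈ Finset.range (r + 1),
            (m.choose i : ℝ) * ((n - m).choose (r - i) : ℝ) *
              (1 - p_ss) ^ i * p_ss ^ (m - i) *
              (1 - p_as) ^ (r - i) * p_as ^ (n - m - (r - i))) *
          ((n - s).choose r : ℝ) / (n.choose r : ℝ)) := by
  have hsn : s ∣ n := hn ▸ dvd_mul_left s k
  calc _ = ∑ c : Fin n → Bool, (∏ i : Fin n, (if c i then phat else 1 - phat)) *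
          ∑ ω : Fin n → Bool, (∏ i : Fin n, (if ω i then (if c i then p_ss else p_as)
            else 1 - (if c i then p_ss else p_as))) *
            ((n : ℝ) * (n - s).choose #{i | ω i = false} / n.choose #{i | ω i = false}) := by
        refine sum_congr rfl fun c _ => ?_
        rw [sum_comm, mul_sum]
        refine sum_congr rfl fun ω _ => ?_
        rw [← mul_sum, sum_perm_errSub_frcMatrix_image hsn]
        field_simp
    _ = ∑ c : Fin n → Bool, (∏ i : Fin n, (if c i then phat else 1 - phat)) *
          frcExpectedErr n s #{i | c i = true} p_ss p_as := by
        simp_rw [sum_stragglerWeight_mul_eq_frcExpectedErr]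
    _ = ∑ m ∈ range (n + 1), (n.choose m : ℝ) * phat ^ m * (1 - phat) ^ (n - m) *
          frcExpectedErr n s m p_ss p_as := by
        simpa using sum_bernoulli_mul_card_eq_sum_choose (ι := Fin n) phat
          (fun m => frcExpectedErr n s m p_ss p_as)

theorem frc_expected_error_random_classes
    (k s n : ℕ) (hk : 0 < k) (hs : 0 < s) (hn : n = k * s)
    (phat p_ss p_as : ℝ) (hp0 : 0 ≤ phat) (hp1 : phat ≤ 1)
    (hss0 : 0 ≤ p_ss) (hss1 : p_ss ≤ 1) (has0 : 0 ≤ p_as) (has1 : p_as ≤ 1) :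
    ∑ c : Fin n → Bool, ∑ π : Equiv.Perm (Fin n), ∑ ω : Fin n → Bool,
      ((∏ i : Fin n, (if c i then phat else 1 - phat)) *
        (n.factorial : ℝ)⁻¹ *
        (∏ i : Fin n,
          (if ω i then (if c i then p_ss else p_as)
           else 1 - (if c i then p_ss else p_as)))) *
      errSub (frcMatrix n s)
        ((Finset.univ.filter (fun w : Fin n => ω w = false)).image
          (fun w => π w))
    = ∑ m ∈ Finset.range (n + 1),
        (n.choose m : ℝ) * phat ^ m * (1 - phat) ^ (n - m) *
        ((n : ℝ) * ∑ r ∈ Finset.range (n - s + 1),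
          (∑ i ∈ Finset.range (r + 1),
            (m.choose i : ℝ) * ((n - m).choose (r - i) : ℝ) *
              (1 - p_ss) ^ i * p_ss ^ (m - i) *
              (1 - p_as) ^ (r - i) * p_as ^ (n - m - (r - i))) *
          ((n - s).choose r : ℝ) / (n.choose r : ℝ)) :=
  frc_expected_error_random_classes_general k s n hn phat p_ss p_as
end
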